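/- For the function k₂ = ½X₁² + X₂² + (7/6)X₃² + (4/3)X₄² − 1 on S³, in stereographic coordinates centered at E₂ one has a₀(E₂) = 0 and a₁(E₂) = 0; i.e. the principal value ∫_{ℝ³}(k_{E₂}(x) − k_{E₂}(0))|x|^{-6} dx = 0 and Δ²k_{E₂}(0) + ∇(Δk_{E₂})(0)·(D²k_{E₂}(0))^{-1}∇(Δk_{E₂})(0) = 0. -/

import Mathlib

/-!
In these coordinates `k_{E₂}(x) = (-2x₀² + ⅔x₁² + 4⁄3x₂²)/(1+|x|²)²`. It is even, and since the
coefficients sum to zero, its sum over the three cyclic permutations of the coordinates vanishes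
identically. The truncated integral over `{|x| ≥ r}` and `Δ²(·)(0)` are invariant under those
permutations (which are isometries fixing `0`), so both vanish. Finally `Δk_{E₂}` is even, so its
gradient at `0` vanishes, which kills the quadratic term of `a₁` whatever `(D²k_{E₂}(0))⁻¹` is.
-/

open MeasureTheory Filter Matrix

noncomputable section

/-- `k₂ = ½X₁² + X₂² + (7/6)X₃² + (4/3)X₄² − 1` on ℝ⁴ (restricted to `S³`). -/
def k2 : EuclideanSpace ℝ (Fin 4) → ℝ :=
  fun X => (1 / 2) * (X 0) ^ 2 + (X 1) ^ 2 + (7 / 6) * (X 2) ^ 2 + (4 / 3) * (X 3) ^ 2 - 1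

/-- Stereographic coordinates `σ_{E₂} : ℝ³ → S³ ⊂ ℝ⁴` centered at `E₂` (`σ_{E₂}(0) = E₂`):
the `E₂`-component is `(1−|x|²)/(1+|x|²)` while the orthogonal components are
`2xᵢ/(1+|x|²)`. -/
def stereoE2 : EuclideanSpace ℝ (Fin 3) → EuclideanSpace ℝ (Fin 4) :=
  fun x =>
    (WithLp.equiv 2 (Fin 4 → ℝ)).symm
      ![2 * x 0 / (1 + ‖x‖ ^ 2), (1 - ‖x‖ ^ 2) / (1 + ‖x‖ ^ 2),
        2 * x 1 / (1 + ‖x‖ ^ 2), 2 * x 2 / (1 + ‖x‖ ^ 2)]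

/-- `k_{E₂} = k₂ ∘ σ_{E₂} : ℝ³ → ℝ`. -/
def kE2 : EuclideanSpace ℝ (Fin 3) → ℝ := k2 ∘ stereoE2

/-- The Euclidean Laplacian on ℝ³ (sum of second partial derivatives). -/
def lapE3 (f : EuclideanSpace ℝ (Fin 3) → ℝ) (x : EuclideanSpace ℝ (Fin 3)) : ℝ :=
  ∑ i : Fin 3,
    iteratedFDeriv ℝ 2 f x
      ![EuclideanSpace.single i (1 : ℝ), EuclideanSpace.single i (1 : ℝ)]

open InnerProductSpace Laplacian Finset
open scoped ContDiff

section Laplacian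

variable {E : Type*} [NormedAddCommGroup E] [InnerProductSpace ℝ E] [FiniteDimensional ℝ E]
  {F : Type*} [NormedAddCommGroup F] [NormedSpace ℝ F]

theorem laplacian_comp_linearIsometryEquiv (f : E → F) (g : E ≃ₗᵢ[ℝ] E) :
    Δ (f ∘ g) = Δ f ∘ g := by
  let v := stdOrthonormalBasis ℝ E
  funext x
  rw [laplacian_eq_iteratedFDeriv_orthonormalBasis _ v,
    laplacian_eq_iteratedFDeriv_orthonormalBasis _ (v.map g)]
  refine sum_congr rfl fun i _ => ?_
  have h := g.toContinuousLinearEquiv.iteratedFDerivWithin_comp_right f uniqueDiffOn_univ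
    (Set.mem_univ (g x)) 2
  simp only [Set.preimage_univ, iteratedFDerivWithin_univ,
    LinearIsometryEquiv.coe_toContinuousLinearEquiv] at h
  rw [h, ContinuousMultilinearMap.compContinuousLinearMap_apply]
  congr 1
  ext j
  fin_cases j <;> simp [OrthonormalBasis.map_apply]

theorem laplacian_comp_iterate (f : E → F) (g : E ≃ₗᵢ[ℝ] E) (k : ℕ) :
    Δ (f ∘ g^[k]) = Δ f ∘ g^[k] := by
  induction k with
  | zero => rfl
  | succ k ih =>
    rw [Function.iterate_succ, ← Function.comp_assoc, laplacian_comp_linearIsometryEquiv, ih,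
      Function.comp_assoc]

theorem Function.Even.laplacian {f : E → F} (hf : f.Even) : (Δ f).Even := by
  intro x
  have h := congrFun (laplacian_comp_linearIsometryEquiv f (LinearIsometryEquiv.neg ℝ)) x
  simpa [Function.comp_def, hf _] using h.symm

theorem laplacian_sum {ι : Type*} (u : Finset ι) {f : ι → E → F}
    (hf : ∀ j ∈ u, ContDiff ℝ 2 (f j)) :
    Δ (∑ j ∈ u, f j) = ∑ j ∈ u, Δ (f j) := by
  funext x
  simp only [laplacian_eq_iteratedFDeriv_orthonormalBasis _ (stdOrthonormalBasis ℝ E),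
    Finset.sum_apply, iteratedFDeriv_sum_apply fun j hj => (hf j hj).contDiffAt,
    _root_.sum_apply]
  exact sum_comm

theorem ContDiff.laplacian {f : E → F} (hf : ContDiff ℝ ∞ f) : ContDiff ℝ ∞ (Δ f) := by
  rw [laplacian_eq_iteratedFDeriv_orthonormalBasis _ (stdOrthonormalBasis ℝ E)]
  exact ContDiff.sum fun i _ =>
    (ContinuousMultilinearMap.apply ℝ (fun _ : Fin 2 => E) F _).contDiff.comp
      (hf.iteratedFDeriv_right (by norm_cast))

theorem laplacian_laplacian_eq_zero_of_sum_comp_iterate_eq_zero {f : E → F}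
    (hf : ContDiff ℝ ∞ f) (g : E ≃ₗᵢ[ℝ] E) {n : ℕ} (hn : n ≠ 0)
    (hsum : ∀ x, ∑ k ∈ range n, f (g^[k] x) = 0) {x : E} (hx : g x = x) :
    Δ (Δ f) x = 0 := by
  have hiter (k : ℕ) : ContDiff ℝ ∞ g^[k] :=
    LinearIsometry.coe_pow g.toLinearIsometry k ▸ (g.toLinearIsometry ^ k).contDiff
  have hcomp {h : E → F} (hh : ContDiff ℝ ∞ h) (k : ℕ) : ContDiff ℝ 2 (h ∘ g^[k]) :=
    (hh.comp (hiter k)).of_le (by norm_cast)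
  have hzero : ∑ k ∈ range n, f ∘ g^[k] = 0 := funext fun y => by simpa using hsum y
  have h := congrArg (fun φ : E → F => Δ (Δ φ) x) hzero
  simp only [laplacian_sum _ fun k _ => hcomp hf k, laplacian_comp_iterate] at h
  rw [laplacian_sum _ fun k _ => hcomp hf.laplacian k] at h
  have hΔ0 : Δ (0 : E → F) = 0 := laplacian_const
  simp only [laplacian_comp_iterate, Finset.sum_apply, Function.comp_apply,
    Function.iterate_fixed hx, sum_const, card_range, hΔ0, Pi.zero_apply] at h
  rw [← Nat.cast_smul_eq_nsmul ℝ, smul_eq_zero] at h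
  exact h.resolve_left (Nat.cast_ne_zero.mpr hn)

end Laplacian

theorem Function.Even.fderiv_at_zero {𝕜 E F : Type*} [NontriviallyNormedField 𝕜] [CharZero 𝕜]
    [NormedAddCommGroup E] [NormedSpace 𝕜 E] [NormedAddCommGroup F] [NormedSpace 𝕜 F]
    {f : E → F} (hf : f.Even) : fderiv 𝕜 f 0 = 0 := by
  have hcomp : f ∘ ContinuousLinearEquiv.neg 𝕜 = f := funext fun x => hf x
  have hchain := (ContinuousLinearEquiv.neg 𝕜 (M := E)).comp_right_fderiv (f := f) (x := 0)
  rw [hcomp] at hchain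
  have hneg : fderiv 𝕜 f 0 = -fderiv 𝕜 f 0 := by
    ext v; simpa using congrArg (· v) hchain
  have htwo : (2 : 𝕜) • fderiv 𝕜 f 0 = 0 := by
    rw [two_smul]; nth_rewrite 2 [hneg]; exact add_neg_cancel _
  exact (smul_eq_zero.mp htwo).resolve_left two_ne_zero

section Orbit

variable {α G : Type*} [MeasurableSpace α] [NormedAddCommGroup G]
  {μ : Measure α} {g : α → α}

theorem MeasureTheory.Integrable.comp_iterate {f : α → G} (hf : Integrable f μ)
    (hg : MeasurePreserving g μ μ) (he : MeasurableEmbedding g) (k : ℕ) :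
    Integrable (f ∘ g^[k]) μ := by
  induction k with
  | zero => exact hf
  | succ k ih =>
    rw [Function.iterate_succ, ← Function.comp_assoc]
    exact (hg.integrable_comp_emb he).2 ih

variable [NormedSpace ℝ G]

theorem MeasureTheory.MeasurePreserving.integral_comp_iterate (hg : MeasurePreserving g μ μ)
    (he : MeasurableEmbedding g) (f : α → G) (k : ℕ) :
    ∫ x, f (g^[k] x) ∂μ = ∫ x, f x ∂μ := by
  induction k with
  | zero => rfl
  | succ k ih => rw [← ih]; exact hg.integral_comp he fun y => f (g^[k] y)

theorem integral_eq_zero_of_sum_comp_iterate_eq_zero (hg : MeasurePreserving g μ μ)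
    (he : MeasurableEmbedding g) {n : ℕ} (hn : n ≠ 0) {f : α → G}
    (hsum : ∀ x, ∑ k ∈ range n, f (g^[k] x) = 0) : ∫ x, f x ∂μ = 0 := by
  by_cases hint : Integrable f μ
  · have h := integral_finsetSum (range n) fun k _ => hint.comp_iterate hg he k
    simp only [Function.comp_apply, hsum, integral_zero, hg.integral_comp_iterate he, sum_const,
      card_range] at h
    rw [← Nat.cast_smul_eq_nsmul ℝ, eq_comm, smul_eq_zero] at h
    exact h.resolve_left (Nat.cast_ne_zero.mpr hn)
  · exact integral_undef hint

end Orbit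

local notation "ℝ³" => EuclideanSpace ℝ (Fin 3)

theorem lapE3_eq_laplacian (f : ℝ³ → ℝ) : lapE3 f = Δ f := by
  rw [laplacian_eq_iteratedFDeriv_orthonormalBasis f (EuclideanSpace.basisFun (Fin 3) ℝ)]
  funext x
  simp [lapE3, EuclideanSpace.basisFun_apply]

theorem kE2_apply (x : ℝ³) :
    kE2 x = (-2 * x 0 ^ 2 + 2 / 3 * x 1 ^ 2 + 4 / 3 * x 2 ^ 2) / (1 + ‖x‖ ^ 2) ^ 2 := by
  have hnorm : ‖x‖ ^ 2 = x 0 ^ 2 + x 1 ^ 2 + x 2 ^ 2 := by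
    simp [EuclideanSpace.norm_sq_eq, Fin.sum_univ_three]
  have hpos : 0 < 1 + ‖x‖ ^ 2 := by positivity
  simp only [kE2, k2, stereoE2, Function.comp_apply, WithLp.equiv_symm_apply, PiLp.toLp_apply,
    one_div, Fin.isValue, cons_val_zero, cons_val_one, Matrix.cons_val, neg_mul]
  rw [hnorm] at hpos ⊢
  field_simp
  ring

theorem contDiff_kE2 : ContDiff ℝ ∞ kE2 := by
  rw [funext kE2_apply]
  refine ContDiff.div ?_ ?_ fun x => by positivity
  · fun_prop
  · exact (contDiff_const.add (contDiff_norm_sq ℝ)).pow 2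

theorem even_kE2 : kE2.Even := fun x => by simp [kE2_apply]

theorem kE2_zero : kE2 0 = 0 := by simp [kE2_apply]

def rotateCoords : ℝ³ ≃ₗᵢ[ℝ] ℝ³ := LinearIsometryEquiv.piLpCongrLeft 2 ℝ ℝ (finRotate 3)

@[simp] theorem rotateCoords_apply_zero (x : ℝ³) : rotateCoords x 0 = x 2 := rfl
@[simp] theorem rotateCoords_apply_one (x : ℝ³) : rotateCoords x 1 = x 0 := rfl
@[simp] theorem rotateCoords_apply_two (x : ℝ³) : rotateCoords x 2 = x 1 := rfl

theorem sum_kE2_rotateCoords_iterate (x : ℝ³) :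
    ∑ k ∈ range 3, kE2 (rotateCoords^[k] x) = 0 := by
  simp only [sum_range_succ, sum_range_zero, Function.iterate_succ_apply',
    Function.iterate_zero_apply, kE2_apply, rotateCoords_apply_zero, rotateCoords_apply_one,
    rotateCoords_apply_two, LinearIsometryEquiv.norm_map]
  ring

theorem setIntegral_kE2_eq_zero (r : ℝ) :
    ∫ x in {x : ℝ³ | r ≤ ‖x‖}, (kE2 x - kE2 0) * ‖x‖ ^ (-6 : ℝ) = 0 := by
  have hS : rotateCoords ⁻¹' {x : ℝ³ | r ≤ ‖x‖} = {x | r ≤ ‖x‖} := by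
    ext x; simp
  have hemb : MeasurableEmbedding rotateCoords := rotateCoords.toHomeomorph.measurableEmbedding
  have hg := rotateCoords.measurePreserving.restrict_preimage_emb hemb {x : ℝ³ | r ≤ ‖x‖}
  rw [hS] at hg
  refine integral_eq_zero_of_sum_comp_iterate_eq_zero hg hemb three_ne_zero fun x => ?_
  have h := sum_kE2_rotateCoords_iterate x
  simp only [sum_range_succ, sum_range_zero, Function.iterate_succ_apply',
    Function.iterate_zero_apply, LinearIsometryEquiv.norm_map, kE2_zero, sub_zero] at h ⊢
  linear_combination ‖x‖ ^ (-6 : ℝ) * h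

/-- For `k₂` in stereographic coordinates centered at `E₂`: `a₀(E₂) = 0` and `a₁(E₂) = 0`,
i.e. the principal value `∫_{ℝ³}(k_{E₂}(x) − k_{E₂}(0))|x|^{-6} dx = 0` and
`Δ²k_{E₂}(0) + ∇(Δk_{E₂})(0)·(D²k_{E₂}(0))⁻¹ ∇(Δk_{E₂})(0) = 0`. -/
theorem stmt18 :
    Tendsto
        (fun r : ℝ =>
          ∫ x in {x : EuclideanSpace ℝ (Fin 3) | r ≤ ‖x‖},
            (kE2 x - kE2 0) * ‖x‖ ^ (-6 : ℝ))
        (nhdsWithin 0 (Set.Ioi 0)) (nhds 0) ∧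
      lapE3 (lapE3 kE2) 0 +
          (fun i : Fin 3 => fderiv ℝ (lapE3 kE2) 0 (EuclideanSpace.single i (1 : ℝ))) ⬝ᵥ
            (Matrix.of fun i j : Fin 3 =>
                iteratedFDeriv ℝ 2 kE2 0
                  ![EuclideanSpace.single i (1 : ℝ),
                    EuclideanSpace.single j (1 : ℝ)])⁻¹.mulVec
              (fun i : Fin 3 =>
                fderiv ℝ (lapE3 kE2) 0 (EuclideanSpace.single i (1 : ℝ))) = 0 := by
  simp only [setIntegral_kE2_eq_zero, lapE3_eq_laplacian, even_kE2.laplacian.fderiv_at_zero,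
    laplacian_laplacian_eq_zero_of_sum_comp_iterate_eq_zero contDiff_kE2 rotateCoords
      three_ne_zero sum_kE2_rotateCoords_iterate (map_zero _)]
  exact ⟨tendsto_const_nhds, by simp⟩
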